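/- Under the two-grid assumptions and the condition N(A^{1/2} M̄ A^{1/2}) ∩ N(Pᵀ(I − AM)A^{1/2}) = N(A), the symmetrized two-grid iteration matrix E_STG := (I − MᵀA)(I − P A_c† Pᵀ A)(I − MA) satisfies ‖E_STG‖_A = ‖E_TG‖_A². -/

import Mathlib

open Matrix

/-- Euclidean norm of a vector in `ℝⁿ`. -/
noncomputable def enorm {n : ℕ} (v : Fin n → ℝ) : ℝ := Real.sqrt (v ⬝ᵥ v)

/-- The `A`-seminorm `‖v‖_A = sqrt (vᵀ A v)` of a vector. -/
noncomputable def vnorm {n : ℕ} (A : Matrix (Fin n) (Fin n) ℝ) (v : Fin n → ℝ) : ℝ :=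
  Real.sqrt (v ⬝ᵥ A.mulVec v)

/-- The `A`-seminorm of a matrix: sup over `v ∉ N(A)` of `‖Xv‖_A / ‖v‖_A`. -/
noncomputable def matNorm {n : ℕ} (A X : Matrix (Fin n) (Fin n) ℝ) : ℝ :=
  sSup ((fun v => vnorm A (X.mulVec v) / vnorm A v) '' {v | A.mulVec v ≠ 0})

/-- Penrose conditions: `X` is the Moore–Penrose inverse of `S`. -/
def IsMP {m : ℕ} (S X : Matrix (Fin m) (Fin m) ℝ) : Prop :=
  S * X * S = S ∧ X * S * X = X ∧ (S * X)ᵀ = S * X ∧ (X * S)ᵀ = X * S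

/-- `eigk S k` is the `k`-th smallest eigenvalue (1-indexed, counted with
multiplicity) of a symmetric matrix `S` (junk value otherwise). -/
noncomputable def eigk {m : ℕ} (S : Matrix (Fin m) (Fin m) ℝ) (k : ℕ) : ℝ :=
  if hS : S.IsHermitian then
    if h : k - 1 < m then hS.eigenvalues (Tuple.sort hS.eigenvalues ⟨k - 1, h⟩) else 0
  else 0

/-- The square root of a positive semidefinite matrix, as `Matrix.PosSemidef.sqrt` was defined
in Mathlib of December 2024 (since removed from Mathlib). -/
noncomputable def Matrix.PosSemidef.sqrt {n 𝕜 : Type*} [Fintype n] [RCLike 𝕜] [PartialOrder 𝕜] [StarOrderedRing 𝕜] [DecidableEq n]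
    {A : Matrix n n 𝕜} (hA : A.PosSemidef) : Matrix n n 𝕜 :=
  hA.1.eigenvectorUnitary.1 * diagonal ((↑) ∘ (√·) ∘ hA.1.eigenvalues) *
    (star hA.1.eigenvectorUnitary : Matrix n n 𝕜)

/-!
With `Q := P A_c† Pᵀ A`, the Penrose conditions make `Q` idempotent and, since `A_c†` is symmetric
by uniqueness of the Moore–Penrose inverse, `A Q` symmetric; so `I - Q` is an `A`-orthogonal
projection; and `I - MᵀA` is the `A`-adjoint of `I - MA`. Hence
`E_STG = E_TG^* E_TG` for the `A`-inner product, i.e. `E_TGᵀ A E_TG = A E_STG`, and the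
C*-identity `‖E^* E‖_A = ‖E‖_A²` follows from Cauchy–Schwarz for the semi-inner product
`(x, y) ↦ xᵀ A y`, applied once in each direction.
-/

theorem mulVec_dotProduct_mulVec {R m k l : Type*} [CommSemiring R] [Fintype m] [Fintype k]
    [Fintype l] (E : Matrix m k R) (B : Matrix m l R) (x : k → R) (y : l → R) :
    (E *ᵥ x) ⬝ᵥ B *ᵥ y = x ⬝ᵥ (Eᵀ * B) *ᵥ y := by
  rw [← mulVec_mulVec, dotProduct_mulVec x, vecMul_transpose]

section Seminorm

variable {n : ℕ} {A : Matrix (Fin n) (Fin n) ℝ}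

theorem vnorm_nonneg (A : Matrix (Fin n) (Fin n) ℝ) (v : Fin n → ℝ) : 0 ≤ vnorm A v :=
  Real.sqrt_nonneg _

theorem dotProduct_mulVec_self_nonneg (hA : A.PosSemidef) (v : Fin n → ℝ) : 0 ≤ v ⬝ᵥ A *ᵥ v := by
  simpa using hA.dotProduct_mulVec_nonneg v

theorem vnorm_sq (hA : A.PosSemidef) (v : Fin n → ℝ) : vnorm A v ^ 2 = v ⬝ᵥ A *ᵥ v :=
  Real.sq_sqrt (dotProduct_mulVec_self_nonneg hA v)

theorem vnorm_pos (hA : A.PosSemidef) {v : Fin n → ℝ} (hv : A *ᵥ v ≠ 0) : 0 < vnorm A v := by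
  refine Real.sqrt_pos.2 ((dotProduct_mulVec_self_nonneg hA v).lt_of_ne fun h => hv ?_)
  simpa [h] using (hA.dotProduct_mulVec_zero_iff v).1

theorem dotProduct_mulVec_le_vnorm_mul_vnorm (hA : A.PosSemidef) (x y : Fin n → ℝ) :
    x ⬝ᵥ A *ᵥ y ≤ vnorm A x * vnorm A y := by
  have hcs := (toBilin' A).apply_sq_le_of_symm
    (fun v => by simpa only [toBilin'_apply'] using dotProduct_mulVec_self_nonneg hA v)
    (LinearMap.BilinForm.isSymm_iff.1 <|
      isSymm_toBilin'_iff_isSymm.2 <| isHermitian_iff_isSymm.1 hA.isHermitian) x y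
  simp only [toBilin'_apply'] at hcs
  rw [vnorm, vnorm, ← Real.sqrt_mul (dotProduct_mulVec_self_nonneg hA x)]
  exact (le_abs_self _).trans (Real.abs_le_sqrt hcs)

def IsMatNormBound (A X : Matrix (Fin n) (Fin n) ℝ) (c : ℝ) : Prop :=
  ∀ v, A *ᵥ v ≠ 0 → vnorm A (X *ᵥ v) ≤ c * vnorm A v

variable {X : Matrix (Fin n) (Fin n) ℝ}

theorem matNorm_nonneg (A X : Matrix (Fin n) (Fin n) ℝ) : 0 ≤ matNorm A X :=
  Real.sSup_nonneg <| by
    rintro _ ⟨v, -, rfl⟩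
    exact div_nonneg (vnorm_nonneg _ _) (vnorm_nonneg _ _)

theorem bddAbove_iff_exists_isMatNormBound (hA : A.PosSemidef) :
    BddAbove ((fun v => vnorm A (X *ᵥ v) / vnorm A v) '' {v | A *ᵥ v ≠ 0}) ↔
      ∃ c, IsMatNormBound A X c := by
  simp only [bddAbove_def, Set.forall_mem_image, Set.mem_ofPred_eq]
  refine exists_congr fun c => forall₂_congr fun v hv => ?_
  exact div_le_iff₀ (vnorm_pos hA hv)

theorem matNorm_le (hA : A.PosSemidef) {c : ℝ} (hc : 0 ≤ c) (h : IsMatNormBound A X c) :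
    matNorm A X ≤ c := by
  refine Real.sSup_le ?_ hc
  rintro _ ⟨v, hv, rfl⟩
  exact (div_le_iff₀ (vnorm_pos hA hv)).2 (h v hv)

theorem isMatNormBound_matNorm (hA : A.PosSemidef) (h : ∃ c, IsMatNormBound A X c) :
    IsMatNormBound A X (matNorm A X) := fun v hv =>
  (div_le_iff₀ (vnorm_pos hA hv)).1 <|
    le_csSup ((bddAbove_iff_exists_isMatNormBound hA).2 h) ⟨v, hv, rfl⟩

theorem matNorm_eq_zero_of_not_exists (hA : A.PosSemidef) (h : ¬ ∃ c, IsMatNormBound A X c) :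
    matNorm A X = 0 :=
  Real.sSup_of_not_bddAbove <| (bddAbove_iff_exists_isMatNormBound hA).not.2 h

theorem matNorm_eq_sq_of_isMatNormBound {E F : Matrix (Fin n) (Fin n) ℝ} (hA : A.PosSemidef)
    (hEF : ∀ c, 0 ≤ c → IsMatNormBound A E c → IsMatNormBound A F (c ^ 2))
    (hFE : ∀ c, 0 ≤ c → IsMatNormBound A F c → IsMatNormBound A E √c) :
    matNorm A F = matNorm A E ^ 2 := by
  by_cases hE : ∃ c, IsMatNormBound A E c
  · have hF := hEF _ (matNorm_nonneg A E) (isMatNormBound_matNorm hA hE)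
    refine (matNorm_le hA (sq_nonneg _) hF).antisymm ?_
    have hle : matNorm A E ≤ √(matNorm A F) := matNorm_le hA (Real.sqrt_nonneg _)
      (hFE _ (matNorm_nonneg A F) (isMatNormBound_matNorm hA ⟨_, hF⟩))
    calc matNorm A E ^ 2 ≤ √(matNorm A F) ^ 2 := pow_le_pow_left₀ (matNorm_nonneg A E) hle 2
      _ = matNorm A F := Real.sq_sqrt (matNorm_nonneg A F)
  · have hF : ¬ ∃ c, IsMatNormBound A F c := fun hF =>
      hE ⟨_, hFE _ (matNorm_nonneg A F) (isMatNormBound_matNorm hA hF)⟩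
    rw [matNorm_eq_zero_of_not_exists hA hE, matNorm_eq_zero_of_not_exists hA hF]
    norm_num

section AdjointProduct

variable {E F : Matrix (Fin n) (Fin n) ℝ}

theorem vnorm_mulVec_sq_of_transpose_mul_mul_eq (hA : A.PosSemidef) (h : Eᵀ * A * E = A * F)
    (v : Fin n → ℝ) : vnorm A (E *ᵥ v) ^ 2 = v ⬝ᵥ A *ᵥ (F *ᵥ v) := by
  rw [vnorm_sq hA, mulVec_dotProduct_mulVec, mulVec_mulVec, h, ← mulVec_mulVec]

theorem isMatNormBound_sqrt_of_transpose_mul_mul_eq (hA : A.PosSemidef)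
    (h : Eᵀ * A * E = A * F) {c : ℝ} (hc : 0 ≤ c) (hF : IsMatNormBound A F c) :
    IsMatNormBound A E √c := fun v hv => by
  have hsq : vnorm A (E *ᵥ v) ^ 2 ≤ (√c * vnorm A v) ^ 2 :=
    calc vnorm A (E *ᵥ v) ^ 2 = v ⬝ᵥ A *ᵥ (F *ᵥ v) :=
          vnorm_mulVec_sq_of_transpose_mul_mul_eq hA h v
      _ ≤ vnorm A v * vnorm A (F *ᵥ v) := dotProduct_mulVec_le_vnorm_mul_vnorm hA _ _
      _ ≤ vnorm A v * (c * vnorm A v) := mul_le_mul_of_nonneg_left (hF v hv) (vnorm_nonneg _ _)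
      _ = (√c * vnorm A v) ^ 2 := by rw [mul_pow, Real.sq_sqrt hc]; ring
  exact (pow_le_pow_iff_left₀ (vnorm_nonneg _ _)
    (mul_nonneg (Real.sqrt_nonneg c) (vnorm_nonneg _ _)) two_ne_zero).1 hsq

theorem isMatNormBound_sq_of_transpose_mul_mul_eq (hA : A.PosSemidef)
    (h : Eᵀ * A * E = A * F) {c : ℝ} (hc : 0 ≤ c) (hE : IsMatNormBound A E c) :
    IsMatNormBound A F (c ^ 2) := fun v _ => by
  have hE' : ∀ w, vnorm A (E *ᵥ w) ≤ c * vnorm A w := fun w => by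
    by_cases hw : A *ᵥ w = 0
    · have hzero : vnorm A (E *ᵥ w) ^ 2 = 0 := by
        rw [vnorm_mulVec_sq_of_transpose_mul_mul_eq hA h, dotProduct_mulVec, ← mulVec_transpose,
          isHermitian_iff_isSymm.1 hA.isHermitian, hw, zero_dotProduct]
      rw [pow_eq_zero_iff two_ne_zero |>.1 hzero]
      exact mul_nonneg hc (vnorm_nonneg A w)
    · exact hE w hw
  have hsq : vnorm A (F *ᵥ v) ^ 2 ≤ c ^ 2 * vnorm A v * vnorm A (F *ᵥ v) :=
    calc vnorm A (F *ᵥ v) ^ 2 = (E *ᵥ (F *ᵥ v)) ⬝ᵥ A *ᵥ (E *ᵥ v) := by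
          rw [vnorm_sq hA, mulVec_dotProduct_mulVec E, mulVec_mulVec v (Eᵀ * A), h, mulVec_mulVec]
      _ ≤ vnorm A (E *ᵥ (F *ᵥ v)) * vnorm A (E *ᵥ v) :=
        dotProduct_mulVec_le_vnorm_mul_vnorm hA _ _
      _ ≤ (c * vnorm A (F *ᵥ v)) * (c * vnorm A v) :=
        mul_le_mul (hE' _) (hE' _) (vnorm_nonneg _ _) (mul_nonneg hc (vnorm_nonneg _ _))
      _ = c ^ 2 * vnorm A v * vnorm A (F *ᵥ v) := by ring
  nlinarith [vnorm_nonneg A (F *ᵥ v), mul_nonneg (sq_nonneg c) (vnorm_nonneg A v)]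

theorem matNorm_eq_sq_of_transpose_mul_mul_eq (hA : A.PosSemidef) (h : Eᵀ * A * E = A * F) :
    matNorm A F = matNorm A E ^ 2 :=
  matNorm_eq_sq_of_isMatNormBound hA
    (fun _ hc => isMatNormBound_sq_of_transpose_mul_mul_eq hA h hc)
    (fun _ hc => isMatNormBound_sqrt_of_transpose_mul_mul_eq hA h hc)

end AdjointProduct

end Seminorm

namespace IsMP

variable {m : ℕ} {S X Y : Matrix (Fin m) (Fin m) ℝ}

theorem transpose (h : IsMP S X) : IsMP Sᵀ Xᵀ := by
  obtain ⟨h1, h2, h3, h4⟩ := h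
  refine ⟨?_, ?_, ?_, ?_⟩
  · simpa [transpose_mul, Matrix.mul_assoc] using congrArg Matrix.transpose h1
  · simpa [transpose_mul, Matrix.mul_assoc] using congrArg Matrix.transpose h2
  · rw [← transpose_mul, transpose_transpose, h4]
  · rw [← transpose_mul, transpose_transpose, h3]

theorem mul_eq_mul_right (hX : IsMP S X) (hY : IsMP S Y) : X * S = Y * S :=
  calc X * S = Sᵀ * Xᵀ := by rw [← transpose_mul, hX.2.2.2]
    _ = (S * Y * S)ᵀ * Xᵀ := by rw [hY.1]
    _ = (Y * S)ᵀ * (X * S)ᵀ := by simp only [transpose_mul, Matrix.mul_assoc]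
    _ = Y * (S * X * S) := by rw [hY.2.2.2, hX.2.2.2]; simp only [Matrix.mul_assoc]
    _ = Y * S := by rw [hX.1]

theorem unique (hX : IsMP S X) (hY : IsMP S Y) : X = Y := by
  have hSX : S * X = S * Y := by
    simpa using congrArg Matrix.transpose (hX.transpose.mul_eq_mul_right hY.transpose)
  calc X = X * S * X := hX.2.1.symm
    _ = Y * S * Y := by rw [Matrix.mul_assoc, hSX, ← Matrix.mul_assoc, hX.mul_eq_mul_right hY]
    _ = Y := hY.2.1

theorem transpose_eq_self (hS : Sᵀ = S) (h : IsMP S X) : Xᵀ = X := by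
  have hT := h.transpose
  rw [hS] at hT
  exact hT.unique h

end IsMP

section TwoGrid

variable {n nc : ℕ} {A : Matrix (Fin n) (Fin n) ℝ} {P : Matrix (Fin n) (Fin nc) ℝ}
  {Acd : Matrix (Fin nc) (Fin nc) ℝ}

theorem coarse_projection_mul_self (hAcd : IsMP (Pᵀ * A * P) Acd) :
    P * Acd * Pᵀ * A * (P * Acd * Pᵀ * A) = P * Acd * Pᵀ * A := by
  have h := congrArg (fun Z => P * Z * Pᵀ * A) hAcd.2.1
  simpa only [Matrix.mul_assoc] using h

theorem transpose_coarse_projection_mul (hAT : Aᵀ = A) (hAcd : IsMP (Pᵀ * A * P) Acd) :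
    (P * Acd * Pᵀ * A)ᵀ * A = A * (P * Acd * Pᵀ * A) := by
  have hAcdT : Acdᵀ = Acd := hAcd.transpose_eq_self <| by
    simp only [transpose_mul, transpose_transpose, hAT, Matrix.mul_assoc]
  simp only [transpose_mul, transpose_transpose, hAT, hAcdT, Matrix.mul_assoc]

theorem twoGrid_transpose_mul_mul_eq (hAT : Aᵀ = A) {Q : Matrix (Fin n) (Fin n) ℝ}
    (hQQ : Q * Q = Q) (hQA : Qᵀ * A = A * Q) (M : Matrix (Fin n) (Fin n) ℝ) :
    ((1 - Q) * (1 - M * A))ᵀ * A * ((1 - Q) * (1 - M * A)) =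
      A * ((1 - Mᵀ * A) * ((1 - Q) * (1 - M * A))) := by
  have hproj : (1 - Q)ᵀ * A * (1 - Q) = A * (1 - Q) := by
    simp only [transpose_sub, transpose_one, sub_mul, mul_sub, one_mul, mul_one, hQA,
      Matrix.mul_assoc, hQQ, sub_self, sub_zero]
  have hadj : (1 - M * A)ᵀ * A = A * (1 - Mᵀ * A) := by
    simp only [transpose_sub, transpose_one, transpose_mul, hAT, sub_mul, mul_sub, one_mul,
      mul_one, Matrix.mul_assoc]
  calc ((1 - Q) * (1 - M * A))ᵀ * A * ((1 - Q) * (1 - M * A))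
      = (1 - M * A)ᵀ * ((1 - Q)ᵀ * A * (1 - Q)) * (1 - M * A) := by
        simp only [transpose_mul, Matrix.mul_assoc]
    _ = A * ((1 - Mᵀ * A) * ((1 - Q) * (1 - M * A))) := by
        rw [hproj, ← Matrix.mul_assoc, hadj]; simp only [Matrix.mul_assoc]

end TwoGrid

theorem stmt9_general {n nc : ℕ}
    (A M : Matrix (Fin n) (Fin n) ℝ) (P : Matrix (Fin n) (Fin nc) ℝ)
    (hA : A.PosSemidef)
    (Acd : Matrix (Fin nc) (Fin nc) ℝ) (hAcd : IsMP (Pᵀ * A * P) Acd) :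
    matNorm A ((1 - Mᵀ * A) * ((1 - P * Acd * Pᵀ * A) * (1 - M * A))) =
      (matNorm A ((1 - P * Acd * Pᵀ * A) * (1 - M * A))) ^ 2 := by
  have hAT : Aᵀ = A := isHermitian_iff_isSymm.1 hA.isHermitian
  have key := twoGrid_transpose_mul_mul_eq hAT (coarse_projection_mul_self hAcd)
    (transpose_coarse_projection_mul hAT hAcd) M
  exact matNorm_eq_sq_of_transpose_mul_mul_eq hA key

theorem stmt9 {n nc : ℕ} (hn : nc < n)
    (A M : Matrix (Fin n) (Fin n) ℝ) (P : Matrix (Fin n) (Fin nc) ℝ)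
    (hA : A.PosSemidef) (hA0 : A ≠ 0)
    (hM : matNorm A (1 - M * A) ≤ 1)
    (hAc0 : Pᵀ * A * P ≠ 0)
    (Acd : Matrix (Fin nc) (Fin nc) ℝ) (hAcd : IsMP (Pᵀ * A * P) Acd)
    (hcond : {v : Fin n → ℝ | (hA.sqrt * (M + Mᵀ - Mᵀ * A * M) * hA.sqrt).mulVec v = 0} ∩
        {v : Fin n → ℝ | (Pᵀ * (1 - A * M) * hA.sqrt).mulVec v = 0} =
      {v : Fin n → ℝ | A.mulVec v = 0}) :
    matNorm A ((1 - Mᵀ * A) * ((1 - P * Acd * Pᵀ * A) * (1 - M * A))) =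
      (matNorm A ((1 - P * Acd * Pᵀ * A) * (1 - M * A))) ^ 2 :=
  stmt9_general A M P hA Acd hAcd
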